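/- arXiv:1109.2669 — 2 statements merged into one kernel-verified Lean document; each statement's English description precedes it below -/
import Mathlib

section
/- If −ρ does not belong to the convex hull of {ζ₁,…,ζ_d}, then for the Orthomin(1) iteration on (I+ρU)x = b with U = diag[ζ₁,…,ζ_d], the sequence q_n = ‖r_{n+1}‖/‖r_n‖ does not converge to ρ. -/
/-!
Write `ω = ⟪U r, r⟫ / ‖r‖²` and `β = ‖A r‖² / ‖r‖² = 1 + ρ² + 2 ρ Re ω` (using `|ζ k| = 1`).
An Orthomin(1) step is an orthogonal projection of `r` onto `(A r)ᗮ`, so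
`q² = 1 - |1 + ρ ω|² / β`, which rearranges to `(ρ² - q²) β = ρ² |ω + ρ|²`.
As `β ≤ (1 + ρ)²`, `q_n → ρ` forces `ω_n → -ρ`; but each `ω_n` is a convex combination of
the `ζ k`, and their convex hull is closed.
-/

open Finset Filter
open scoped InnerProductSpace ComplexConjugate Topology

section InnerProductSpace
variable {𝕜 E : Type*} [RCLike 𝕜] [NormedAddCommGroup E] [InnerProductSpace 𝕜 E]

theorem norm_sub_inner_div_smul_sq (x y : E) :
    ‖x - (⟪y, x⟫_𝕜 / ((‖y‖ ^ 2 : ℝ) : 𝕜)) • y‖ ^ 2 = ‖x‖ ^ 2 - ‖⟪y, x⟫_𝕜‖ ^ 2 / ‖y‖ ^ 2 := by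
  rw [← Submodule.starProjection_singleton, ← Submodule.starProjection_orthogonal_val,
    Submodule.norm_sq_eq_add_norm_sq_starProjection x (𝕜 ∙ y), Submodule.starProjection_singleton,
    norm_smul, norm_div, mul_pow, div_pow, RCLike.norm_ofReal, abs_of_nonneg (by positivity)]
  rcases eq_or_ne y 0 with rfl | hy
  · simp
  · field_simp; ring

end InnerProductSpace

variable {ι : Type*} [Fintype ι]

theorem sum_norm_sq_sub_mul_eq {𝕜 : Type*} [RCLike 𝕜] (x y : ι → 𝕜) :
    ∑ k, ‖x k - (∑ j, x j * conj (y j)) / ((∑ j, ‖y j‖ ^ 2 : ℝ) : 𝕜) * y k‖ ^ 2 =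
      ∑ k, ‖x k‖ ^ 2 - ‖∑ k, x k * conj (y k)‖ ^ 2 / ∑ k, ‖y k‖ ^ 2 := by
  have h := norm_sub_inner_div_smul_sq (𝕜 := 𝕜) (WithLp.toLp 2 x) (WithLp.toLp 2 y)
  simp only [EuclideanSpace.norm_sq_eq, PiLp.inner_apply, RCLike.inner_apply] at h
  simpa [mul_comm] using h

theorem sum_norm_sq_pos {r : ι → ℂ} (hr : r ≠ 0) : 0 < ∑ k, ‖r k‖ ^ 2 := by
  obtain ⟨k, hk⟩ := Function.ne_iff.1 hr
  exact Finset.sum_pos' (fun _ _ => by positivity) ⟨k, mem_univ k, pow_pos (norm_pos_iff.2 hk) 2⟩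

/-- `⟪U r, r⟫ / ‖r‖²` for `U = diag ζ`, written as a barycentre of the `ζ k`. -/
noncomputable def rayleighQuotient (ζ r : ι → ℂ) : ℂ :=
  univ.centerMass (fun k => ‖r k‖ ^ 2) ζ

variable (ζ : ι → ℂ) {r : ι → ℂ}

theorem rayleighQuotient_mem_convexHull (hr : r ≠ 0) :
    rayleighQuotient ζ r ∈ convexHull ℝ (Set.range ζ) :=
  univ.centerMass_mem_convexHull (fun _ _ => by positivity) (sum_norm_sq_pos hr)
    fun k _ => Set.mem_range_self k

theorem norm_rayleighQuotient_le_one (hζ : ∀ k, ‖ζ k‖ = 1) (hr : r ≠ 0) :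
    ‖rayleighQuotient ζ r‖ ≤ 1 := by
  have hsub : convexHull ℝ (Set.range ζ) ⊆ Metric.closedBall 0 1 :=
    convexHull_min (Set.range_subset_iff.2 fun k => by simp [hζ k]) (convex_closedBall 0 1)
  simpa using hsub (rayleighQuotient_mem_convexHull ζ hr)

theorem sum_norm_sq_mul_eq (hr : r ≠ 0) :
    ∑ k, (‖r k‖ ^ 2 : ℂ) * ζ k = ((∑ k, ‖r k‖ ^ 2 : ℝ) : ℂ) * rayleighQuotient ζ r := by
  have hN : ((∑ k, ‖r k‖ ^ 2 : ℝ) : ℂ) ≠ 0 := Complex.ofReal_ne_zero.2 (sum_norm_sq_pos hr).ne'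
  simp only [rayleighQuotient, centerMass, Complex.real_smul, Complex.ofReal_inv, ← mul_assoc,
    mul_inv_cancel₀ hN, one_mul, Complex.ofReal_pow]

theorem norm_one_add_ofReal_mul_sq (ρ : ℝ) (z : ℂ) :
    ‖1 + ρ * z‖ ^ 2 = 1 + 2 * ρ * z.re + ρ ^ 2 * ‖z‖ ^ 2 := by
  simp only [Complex.sq_norm, Complex.normSq_apply, Complex.add_re, Complex.add_im,
    Complex.re_ofReal_mul, Complex.im_ofReal_mul, Complex.one_re, Complex.one_im]
  ring

theorem norm_add_ofReal_sq (ρ : ℝ) (z : ℂ) :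
    ‖z + ρ‖ ^ 2 = ‖z‖ ^ 2 + 2 * ρ * z.re + ρ ^ 2 := by
  simp only [Complex.sq_norm, Complex.normSq_apply, Complex.add_re, Complex.add_im,
    Complex.ofReal_re, Complex.ofReal_im]
  ring

variable (ρ : ℝ)

theorem sum_norm_sq_mul_one_add_mul (hr : r ≠ 0) :
    ∑ k, (‖r k‖ ^ 2 : ℂ) * (1 + ρ * ζ k) =
      ((∑ k, ‖r k‖ ^ 2 : ℝ) : ℂ) * (1 + ρ * rayleighQuotient ζ r) := by
  simp only [mul_add, mul_one, sum_add_distrib, mul_left_comm _ (ρ : ℂ), ← mul_sum,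
    sum_norm_sq_mul_eq ζ hr]
  push_cast
  ring

theorem sum_mul_conj_one_add_mul (hr : r ≠ 0) :
    ∑ k, r k * conj ((1 + ρ * ζ k) * r k) =
      ((∑ k, ‖r k‖ ^ 2 : ℝ) : ℂ) * conj (1 + ρ * rayleighQuotient ζ r) := by
  have hterm : ∀ k, r k * conj ((1 + ρ * ζ k) * r k) = conj ((‖r k‖ ^ 2 : ℂ) * (1 + ρ * ζ k)) := by
    intro k
    rw [map_mul, map_mul, ← Complex.ofReal_pow, Complex.conj_ofReal, Complex.ofReal_pow,
      ← Complex.mul_conj']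
    ring
  rw [sum_congr rfl fun k _ => hterm k, ← map_sum, sum_norm_sq_mul_one_add_mul ζ ρ hr, map_mul,
    Complex.conj_ofReal]

theorem sum_norm_one_add_mul_mul_sq (hζ : ∀ k, ‖ζ k‖ = 1) (hr : r ≠ 0) :
    ∑ k, ‖(1 + ρ * ζ k) * r k‖ ^ 2 =
      (∑ k, ‖r k‖ ^ 2) * (1 + ρ ^ 2 + 2 * ρ * (rayleighQuotient ζ r).re) := by
  have h := congrArg Complex.re (sum_norm_sq_mul_eq ζ hr)
  simp only [Complex.re_sum, ← Complex.ofReal_pow, Complex.re_ofReal_mul] at h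
  calc ∑ k, ‖(1 + ρ * ζ k) * r k‖ ^ 2
      = ∑ k, ((1 + ρ ^ 2) * ‖r k‖ ^ 2 + 2 * ρ * (‖r k‖ ^ 2 * (ζ k).re)) := by
        refine sum_congr rfl fun k _ => ?_
        rw [norm_mul, mul_pow, norm_one_add_ofReal_mul_sq, hζ]
        ring
    _ = _ := by
        rw [sum_add_distrib, ← mul_sum, ← mul_sum, h]
        ring

/-- One Orthomin(1) step `r ↦ r - λ A r` for `A = I + ρ diag ζ`, with `λ = ⟪r, A r⟫ / ‖A r‖²`. -/
noncomputable def orthominStep (ρ : ℝ) (ζ r : ι → ℂ) : ι → ℂ :=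
  fun k => r k - (∑ j, r j * conj ((1 + ρ * ζ j) * r j)) /
    ((∑ j, ‖(1 + ρ * ζ j) * r j‖ ^ 2 : ℝ) : ℂ) * ((1 + ρ * ζ k) * r k)

theorem sum_norm_sq_orthominStep :
    ∑ k, ‖orthominStep ρ ζ r k‖ ^ 2 = ∑ k, ‖r k‖ ^ 2 -
      ‖∑ k, r k * conj ((1 + ρ * ζ k) * r k)‖ ^ 2 / ∑ k, ‖(1 + ρ * ζ k) * r k‖ ^ 2 :=
  sum_norm_sq_sub_mul_eq r _

theorem sq_one_sub_le_one_add_sq_add_two_mul_re {ω : ℂ} (hρ : 0 ≤ ρ) (hω : ‖ω‖ ≤ 1) :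
    (1 - ρ) ^ 2 ≤ 1 + ρ ^ 2 + 2 * ρ * ω.re := by
  nlinarith [neg_abs_le ω.re, Complex.abs_re_le_norm ω]

theorem one_add_sq_add_two_mul_re_le_sq_one_add {ω : ℂ} (hρ : 0 ≤ ρ) (hω : ‖ω‖ ≤ 1) :
    1 + ρ ^ 2 + 2 * ρ * ω.re ≤ (1 + ρ) ^ 2 := by
  nlinarith [le_abs_self ω.re, Complex.abs_re_le_norm ω]

theorem sq_sub_residual_ratio_mul (hζ : ∀ k, ‖ζ k‖ = 1) (hr : r ≠ 0) (hρ : 0 ≤ ρ) (hρ1 : ρ ≠ 1) :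
    (ρ ^ 2 - (∑ k, ‖orthominStep ρ ζ r k‖ ^ 2) / ∑ k, ‖r k‖ ^ 2) *
        (1 + ρ ^ 2 + 2 * ρ * (rayleighQuotient ζ r).re) =
      ρ ^ 2 * ‖rayleighQuotient ζ r + ρ‖ ^ 2 := by
  have hN := sum_norm_sq_pos hr
  have hβ : 0 < 1 + ρ ^ 2 + 2 * ρ * (rayleighQuotient ζ r).re :=
    (sq_pos_of_ne_zero (sub_ne_zero.2 hρ1.symm)).trans_le
      (sq_one_sub_le_one_add_sq_add_two_mul_re ρ hρ (norm_rayleighQuotient_le_one ζ hζ hr))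
  rw [sum_norm_sq_orthominStep, sum_mul_conj_one_add_mul ζ ρ hr,
    sum_norm_one_add_mul_mul_sq ζ ρ hζ hr, norm_mul, Complex.norm_conj, Complex.norm_real,
    Real.norm_of_nonneg hN.le, mul_pow, norm_one_add_ofReal_mul_sq, norm_add_ofReal_sq]
  set β := 1 + ρ ^ 2 + 2 * ρ * (rayleighQuotient ζ r).re with hβ_def
  field_simp
  rw [hβ_def]
  ring

theorem sq_mul_norm_rayleighQuotient_add_sq_le (hζ : ∀ k, ‖ζ k‖ = 1) (hr : r ≠ 0) (hρ : 0 ≤ ρ)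
    (hρ1 : ρ ≠ 1) :
    ρ ^ 2 * ‖rayleighQuotient ζ r + ρ‖ ^ 2 ≤
      (1 + ρ) ^ 2 * |ρ ^ 2 - (∑ k, ‖orthominStep ρ ζ r k‖ ^ 2) / ∑ k, ‖r k‖ ^ 2| := by
  have hω := norm_rayleighQuotient_le_one ζ hζ hr
  rw [← sq_sub_residual_ratio_mul ζ ρ hζ hr hρ hρ1, mul_comm ((1 + ρ) ^ 2)]
  exact mul_le_mul (le_abs_self _) (one_add_sq_add_two_mul_re_le_sq_one_add ρ hρ hω)
    ((sq_nonneg _).trans (sq_one_sub_le_one_add_sq_add_two_mul_re ρ hρ hω)) (abs_nonneg _)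

/-- Proposition 4.5: if −ρ ∉ Hull(ζ₁,…,ζ_d), then the Orthomin(1) residual
ratios q_n = ‖r_{n+1}‖/‖r_n‖ do not converge to ρ. -/
theorem stmt9 (d : ℕ) (ρ : ℝ) (h1 : 0 < ρ) (h2 : ρ < 1)
    (ζ : Fin d → ℂ) (hζ : ∀ k, ‖ζ k‖ = 1)
    (hhull : (-ρ : ℂ) ∉ convexHull ℝ (Set.range ζ))
    (r : ℕ → Fin d → ℂ) (hrne : ∀ n, r n ≠ 0)
    (lam : ℕ → ℂ)
    (hlam : ∀ n, lam n = (∑ k, r n k * (starRingEnd ℂ) ((1 + ρ * ζ k) * r n k)) /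
      ((∑ k, ‖(1 + ρ * ζ k) * r n k‖ ^ 2 : ℝ) : ℂ))
    (hrec : ∀ n, r (n+1) = fun k => r n k - lam n * ((1 + ρ * ζ k) * r n k))
    (q : ℕ → ℝ)
    (hq : ∀ n, q n = Real.sqrt (∑ k, ‖r (n+1) k‖ ^ 2) /
      Real.sqrt (∑ k, ‖r n k‖ ^ 2)) :
    ¬ Tendsto q atTop (nhds ρ) := by
  intro hlim
  have hstep : ∀ n, r (n + 1) = orthominStep ρ ζ (r n) := fun n => by rw [hrec, hlam]; rfl
  have hq_sq : ∀ n, q n ^ 2 = (∑ k, ‖orthominStep ρ ζ (r n) k‖ ^ 2) / ∑ k, ‖r n k‖ ^ 2 := by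
    intro n
    rw [hq, div_pow, Real.sq_sqrt (by positivity), Real.sq_sqrt (by positivity), hstep]
  have hbound : ∀ n, ‖rayleighQuotient ζ (r n) - (-ρ)‖ ≤ (1 + ρ) / ρ * √|ρ ^ 2 - q n ^ 2| := by
    intro n
    rw [div_mul_eq_mul_div, le_div_iff₀' h1, sub_neg_eq_add,
      ← pow_le_pow_iff_left₀ (by positivity) (by positivity) two_ne_zero, mul_pow, mul_pow,
      Real.sq_sqrt (abs_nonneg _), hq_sq]
    exact sq_mul_norm_rayleighQuotient_add_sq_le ζ ρ hζ (hrne n) h1.le h2.ne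
  have hlim' : Tendsto (fun n => (1 + ρ) / ρ * √|ρ ^ 2 - q n ^ 2|) atTop (𝓝 0) := by
    have h := ((tendsto_const_nhds (x := ρ ^ 2)).sub (hlim.pow 2)).abs.sqrt.const_mul ((1 + ρ) / ρ)
    rwa [sub_self, abs_zero, Real.sqrt_zero, mul_zero] at h
  have hω : Tendsto (fun n => rayleighQuotient ζ (r n)) atTop (𝓝 (-ρ)) :=
    tendsto_iff_norm_sub_tendsto_zero.2 (squeeze_zero (fun _ => norm_nonneg _) hbound hlim')
  exact hhull (((Set.finite_range ζ).isCompact_convexHull ℝ).isClosed.mem_of_tendsto hω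
    (.of_forall fun n => rayleighQuotient_mem_convexHull ζ (hrne n)))
end

section
/- For 0 < ρ < 1, the limits of the k-th moments of the measures dμ_n(z) = ∏_{j=0}^{n−1}|z − ρ^{2j+1}|² dμ₀(z) on the unit circle satisfy lim_{n→∞} (∫ z^k dμ_n)/(∫ dμ_n) = (−1)^k ρ^{k²} for every integer k ≥ 0. -/
/-!
Writing `z = exp (θ I)`, multiplying a weight by `|z - a|² = 1 + a² - a (z + z⁻¹)` turns its
moments `Mₙ(m) = ∫ z^m wₙ` into the three-term recurrence
`Mₙ₊₁(m) = (1 + a²) Mₙ(m) - a (Mₙ(m + 1) + Mₙ(m - 1))` with `a = ρ^(2n+1)`. The coefficients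
`(-1)^m ρ^(m²) [2n choose n+m]_{ρ²}` of the finite Jacobi triple product satisfy the same
recurrence and the same initial values, so `Mₙ(m) = 2π (-1)^m ρ^(m²) [2n choose n+m]_{ρ²}`.
For fixed `m` the Gaussian binomial tends to `1 / (ρ²; ρ²)_∞ ≠ 0` as `n → ∞`, so the ratio
`Mₙ(k) / Mₙ(0)` tends to `(-1)^k ρ^(k²)`.
-/

open scoped Real
open Finset Filter

/-- `qPochhammer q n` is `(q; q)ₙ`. -/
def qPochhammer (q : ℝ) (n : ℕ) : ℝ := ∏ t ∈ range n, (1 - q ^ (t + 1))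

/-- `1 / (q; q)ⱼ`, extended by zero to negative `j`: with this convention
`qPochhammerInv_eq_mul_succ` holds for every integer `j`. -/
noncomputable def qPochhammerInv (q : ℝ) (j : ℤ) : ℝ :=
  if j < 0 then 0 else (qPochhammer q j.toNat)⁻¹

section QPochhammer

variable {q : ℝ}

lemma qPochhammer_succ (n : ℕ) :
    qPochhammer q (n + 1) = qPochhammer q n * (1 - q ^ (n + 1)) :=
  prod_range_succ _ _

lemma qPochhammerInv_of_neg {j : ℤ} (hj : j < 0) : qPochhammerInv q j = 0 := if_pos hj

lemma qPochhammerInv_natCast (n : ℕ) : qPochhammerInv q n = (qPochhammer q n)⁻¹ := by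
  simp [qPochhammerInv]

lemma qPochhammerInv_eq_mul_succ (hq0 : 0 ≤ q) (hq1 : q < 1) (j : ℤ) :
    qPochhammerInv q j = (1 - q ^ (j + 1)) * qPochhammerInv q (j + 1) := by
  rcases lt_trichotomy j (-1) with hj | rfl | hj
  · rw [qPochhammerInv_of_neg (by omega), qPochhammerInv_of_neg (by omega), mul_zero]
  · simp [qPochhammerInv_of_neg]
  lift j to ℕ using (by omega)
  have hne : (1 : ℝ) - q ^ (j + 1) ≠ 0 :=
    (sub_pos.2 (pow_lt_one₀ hq0 hq1 j.succ_ne_zero)).ne'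
  rw [show (j : ℤ) + 1 = ((j + 1 : ℕ) : ℤ) by push_cast; ring, zpow_natCast,
    qPochhammerInv_natCast, qPochhammerInv_natCast, qPochhammer_succ, mul_inv,
    mul_left_comm, mul_inv_cancel₀ hne, mul_one]

lemma tendsto_qPochhammer (hq0 : 0 ≤ q) (hq1 : q < 1) :
    Tendsto (qPochhammer q) atTop (nhds (∏' t, (1 - q ^ (t + 1)))) ∧
      ∏' t, (1 - q ^ (t + 1)) ≠ 0 := by
  have hsum : Summable fun t : ℕ => ‖-q ^ (t + 1)‖ := by
    simpa [abs_of_nonneg hq0, pow_succ'] using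
      (summable_geometric_of_lt_one hq0 hq1).mul_left q
  simp only [sub_eq_add_neg]
  refine ⟨(multipliable_one_add_of_summable hsum).hasProd.tendsto_prod_nat,
    tprod_one_add_ne_zero_of_summable (fun t => ?_) hsum⟩
  simpa [← sub_eq_add_neg] using (sub_pos.2 (pow_lt_one₀ hq0 hq1 t.succ_ne_zero)).ne'

lemma tendsto_qPochhammerInv_add (hq0 : 0 ≤ q) (hq1 : q < 1) (m : ℤ) :
    Tendsto (fun n : ℕ => qPochhammerInv q (n + m)) atTop
      (nhds (∏' t, (1 - q ^ (t + 1)))⁻¹) := by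
  obtain ⟨hlim, hne⟩ := tendsto_qPochhammer hq0 hq1
  have hidx : Tendsto (fun n : ℕ => ((n : ℤ) + m).toNat) atTop atTop :=
    tendsto_atTop_mono (fun n => by omega) (tendsto_sub_atTop_nat m.natAbs)
  refine ((hlim.comp hidx).inv₀ hne).congr' ?_
  filter_upwards [eventually_ge_atTop m.natAbs] with n hn
  rw [Function.comp_apply, qPochhammerInv, if_neg (by omega)]

/-- The Gaussian binomial coefficient `[2n choose n+m]_q`, which vanishes unless `|m| ≤ n`. -/
noncomputable def qBinomial (q : ℝ) (n : ℕ) (m : ℤ) : ℝ :=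
  qPochhammer q (2 * n) * qPochhammerInv q (n + m) * qPochhammerInv q (n - m)

lemma qBinomial_zero (m : ℤ) : qBinomial q 0 m = if m = 0 then 1 else 0 := by
  rcases lt_trichotomy m 0 with hm | rfl | hm
  · simp [qBinomial, qPochhammerInv_of_neg hm, hm.ne]
  · simp [qBinomial, qPochhammerInv, qPochhammer]
  · simp [qBinomial, qPochhammerInv_of_neg (neg_neg_of_pos hm), hm.ne']

lemma qBinomial_succ (hq0 : 0 < q) (hq1 : q < 1) (n : ℕ) (m : ℤ) :
    qBinomial q (n + 1) m = (1 + q ^ (2 * n + 1)) * qBinomial q n m +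
      q ^ ((n : ℤ) + m + 1) * qBinomial q n (m + 1) +
        q ^ ((n : ℤ) - m + 1) * qBinomial q n (m - 1) := by
  set X := q ^ ((n : ℤ) + m)
  set Y := q ^ ((n : ℤ) - m)
  have hXY : q ^ (2 * n + 1) = q * X * Y := by
    rw [mul_assoc, ← zpow_add₀ hq0.ne', pow_succ', ← zpow_natCast]
    congr 2; push_cast; ring
  have hP : qPochhammer q (2 * (n + 1)) =
      qPochhammer q (2 * n) * (1 - q * X * Y) * (1 - q ^ 2 * X * Y) := by
    rw [show 2 * (n + 1) = 2 * n + 1 + 1 by ring, qPochhammer_succ, qPochhammer_succ,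
      pow_succ q (2 * n + 1), hXY]
    ring
  have hR := qPochhammerInv_eq_mul_succ hq0.le hq1
  have hRa : qPochhammerInv q (n + m) = (1 - q * X) * qPochhammerInv q (n + m + 1) := by
    rw [hR, zpow_add_one₀ hq0.ne', mul_comm X]
  have hRa' : qPochhammerInv q (n + m - 1) = (1 - X) * qPochhammerInv q (n + m) := by
    rw [hR, sub_add_cancel]
  have hRb : qPochhammerInv q (n - m) = (1 - q * Y) * qPochhammerInv q (n - m + 1) := by
    rw [hR, zpow_add_one₀ hq0.ne', mul_comm Y]
  have hRb' : qPochhammerInv q (n - m - 1) = (1 - Y) * qPochhammerInv q (n - m) := by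
    rw [hR, sub_add_cancel]
  simp only [qBinomial]
  push_cast
  rw [show (n : ℤ) + 1 + m = n + m + 1 by ring, show (n : ℤ) + 1 - m = n - m + 1 by ring,
    show (n : ℤ) + (m + 1) = n + m + 1 by ring, show (n : ℤ) - (m + 1) = n - m - 1 by ring,
    show (n : ℤ) + (m - 1) = n + m - 1 by ring, show (n : ℤ) - (m - 1) = n - m + 1 by ring,
    hRa', hRb', hRa, hRb, hP, hXY, zpow_add_one₀ hq0.ne', zpow_add_one₀ hq0.ne']
  ring

lemma tendsto_qBinomial (hq0 : 0 ≤ q) (hq1 : q < 1) (m : ℤ) :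
    Tendsto (fun n => qBinomial q n m) atTop (nhds (∏' t, (1 - q ^ (t + 1)))⁻¹) := by
  obtain ⟨hlim, hne⟩ := tendsto_qPochhammer hq0 hq1
  have h2n : Tendsto (fun n : ℕ => qPochhammer q (2 * n)) atTop
      (nhds (∏' t, (1 - q ^ (t + 1)))) :=
    hlim.comp (tendsto_id.const_mul_atTop' two_pos)
  have := (h2n.mul (tendsto_qPochhammerInv_add hq0 hq1 m)).mul
    (tendsto_qPochhammerInv_add hq0 hq1 (-m))
  rw [mul_inv_cancel₀ hne, one_mul] at this
  simpa [qBinomial, sub_eq_add_neg] using this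

end QPochhammer

noncomputable def tripleProductCoeff (ρ : ℝ) (n : ℕ) (m : ℤ) : ℝ :=
  (-1) ^ m * ρ ^ (m ^ 2) * qBinomial (ρ ^ 2) n m

lemma tripleProductCoeff_succ {ρ : ℝ} (hρ0 : ρ ≠ 0) (hρ : |ρ| < 1) (n : ℕ) (m : ℤ) :
    tripleProductCoeff ρ (n + 1) m = (1 + (ρ ^ (2 * n + 1)) ^ 2) * tripleProductCoeff ρ n m -
      ρ ^ (2 * n + 1) * (tripleProductCoeff ρ n (m + 1) + tripleProductCoeff ρ n (m - 1)) := by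
  have hpow : ∀ {k l : ℤ} (j : ℕ), (j : ℤ) + k ^ 2 = m ^ 2 + 2 * l →
      ρ ^ j * ρ ^ (k ^ 2) = ρ ^ (m ^ 2) * (ρ ^ 2) ^ l := by
    intro k l j h
    rw [← zpow_natCast, ← zpow_add₀ hρ0, h, zpow_add₀ hρ0, zpow_mul, zpow_ofNat]
  have hp := hpow (k := m + 1) (l := n + m + 1) (2 * n + 1) (by push_cast; ring)
  have hm := hpow (k := m - 1) (l := n - m + 1) (2 * n + 1) (by push_cast; ring)
  have hs1 : (-1 : ℝ) ^ (m + 1) = -(-1) ^ m := by rw [zpow_add_one₀ (by norm_num)]; ring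
  have hs2 : (-1 : ℝ) ^ (m - 1) = -(-1) ^ m := by rw [zpow_sub_one₀ (by norm_num)]; norm_num
  simp only [tripleProductCoeff]
  rw [qBinomial_succ (by positivity) ((sq_lt_one_iff_abs_lt_one ρ).2 hρ), hs1, hs2, ← pow_mul,
    pow_mul']
  linear_combination (-(-1) ^ m * qBinomial (ρ ^ 2) n (m + 1)) * hp -
    ((-1) ^ m * qBinomial (ρ ^ 2) n (m - 1)) * hm

lemma tendsto_tripleProductCoeff_div {ρ : ℝ} (hρ : |ρ| < 1) (m : ℤ) :
    Tendsto (fun n => tripleProductCoeff ρ n m / tripleProductCoeff ρ n 0) atTop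
      (nhds ((-1) ^ m * ρ ^ (m ^ 2))) := by
  have hq0 := sq_nonneg ρ
  have hq1 := (sq_lt_one_iff_abs_lt_one ρ).2 hρ
  have hP : (∏' t, (1 - (ρ ^ 2) ^ (t + 1)))⁻¹ ≠ 0 :=
    inv_ne_zero (tendsto_qPochhammer hq0 hq1).2
  have := ((tendsto_qBinomial hq0 hq1 m).div (tendsto_qBinomial hq0 hq1 0) hP).const_mul
    ((-1) ^ m * ρ ^ (m ^ 2))
  rw [div_self hP, mul_one] at this
  refine this.congr fun n => ?_
  simp [tripleProductCoeff, mul_div_assoc]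

open Complex

noncomputable def circleMoment (w : ℝ → ℝ) (m : ℤ) : ℂ :=
  ∫ θ in (0 : ℝ)..2 * π, exp (θ * I) ^ m * (w θ : ℂ)

lemma integral_exp_mul_I_zpow (m : ℤ) :
    ∫ θ in (0 : ℝ)..2 * π, exp (θ * I) ^ m = if m = 0 then 2 * π else 0 := by
  split_ifs with hm
  · simp [hm]
  have hexp : ∀ θ : ℝ, exp (θ * I) ^ m = exp ((m * I) * θ) := fun θ => by
    rw [← exp_int_mul]; ring_nf
  have hmI : (m : ℂ) * I ≠ 0 := by simp [I_ne_zero, hm]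
  simp_rw [hexp]
  rw [integral_exp_mul_complex hmI]
  push_cast
  rw [show (m : ℂ) * I * (2 * π) = m * (2 * π * I) by ring, exp_int_mul_two_pi_mul_I]
  simp

lemma ofReal_norm_sub_ofReal_sq {z : ℂ} (hz : ‖z‖ = 1) (a : ℝ) :
    ((‖z - a‖ ^ 2 : ℝ) : ℂ) = 1 + a ^ 2 - a * (z + z⁻¹) := by
  have hconj : (starRingEnd ℂ) z = z⁻¹ := by
    rw [inv_def, ← Complex.sq_norm, hz]; simp
  rw [Complex.sq_norm, ← mul_conj, map_sub, hconj, conj_ofReal]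
  have hz0 : z ≠ 0 := by rintro rfl; simp at hz
  field_simp
  ring

lemma circleMoment_mul_norm_sub_sq {w : ℝ → ℝ} (hw : Continuous w) (a : ℝ) (m : ℤ) :
    circleMoment (fun θ => w θ * ‖exp (θ * I) - a‖ ^ 2) m =
      (1 + a ^ 2) * circleMoment w m - a * (circleMoment w (m + 1) + circleMoment w (m - 1)) := by
  have hint : ∀ k : ℤ, IntervalIntegrable (fun θ : ℝ => exp (θ * I) ^ k * (w θ : ℂ))
      MeasureTheory.volume 0 (2 * π) := fun k => by
    refine Continuous.intervalIntegrable (Continuous.mul ?_ (continuous_ofReal.comp hw)) _ _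
    exact (by fun_prop : Continuous fun θ : ℝ => exp (θ * I)).zpow₀ k
      fun _ => .inl (exp_ne_zero _)
  have hnorm : ∀ θ : ℝ, ‖exp (θ * I)‖ = 1 := fun θ => norm_exp_ofReal_mul_I θ
  have hz : ∀ θ : ℝ, exp (θ * I) ≠ 0 := fun θ => exp_ne_zero _
  simp only [circleMoment]
  rw [← intervalIntegral.integral_add (hint _) (hint _), ← intervalIntegral.integral_const_mul,
    ← intervalIntegral.integral_const_mul, ← intervalIntegral.integral_sub ((hint m).const_mul _)
      (((hint _).add (hint _)).const_mul _)]
  refine intervalIntegral.integral_congr fun θ _ => ?_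
  rw [ofReal_mul, ofReal_norm_sub_ofReal_sq (hnorm θ), zpow_add_one₀ (hz θ),
    zpow_sub_one₀ (hz θ)]
  ring

noncomputable def circleWeight (ρ : ℝ) (n : ℕ) (θ : ℝ) : ℝ :=
  ∏ j ∈ range n, ‖exp (θ * I) - (ρ : ℂ) ^ (2 * j + 1)‖ ^ 2

lemma continuous_circleWeight (ρ : ℝ) (n : ℕ) : Continuous (circleWeight ρ n) := by
  unfold circleWeight; fun_prop

lemma circleMoment_circleWeight {ρ : ℝ} (hρ0 : ρ ≠ 0) (hρ : |ρ| < 1) (n : ℕ) (m : ℤ) :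
    circleMoment (circleWeight ρ n) m = 2 * π * tripleProductCoeff ρ n m := by
  induction n generalizing m with
  | zero =>
    simp only [circleMoment, circleWeight, range_zero, prod_empty, ofReal_one, mul_one,
      integral_exp_mul_I_zpow, tripleProductCoeff, qBinomial_zero]
    split_ifs <;> simp_all
  | succ n ih =>
    have hw : circleWeight ρ (n + 1) =
        fun θ => circleWeight ρ n θ * ‖exp (θ * I) - ((ρ ^ (2 * n + 1) : ℝ) : ℂ)‖ ^ 2 := by
      ext θ; simp [circleWeight, prod_range_succ]
    rw [hw, circleMoment_mul_norm_sub_sq (continuous_circleWeight ρ n), ih, ih, ih,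
      tripleProductCoeff_succ hρ0 hρ]
    push_cast
    ring

/-- Limits of the k-th moments of dμ_n(z) = ∏_{j=0}^{n−1}|z − ρ^{2j+1}|² dμ₀(z)
on the unit circle: lim_n (∫ z^k dμ_n)/(∫ dμ_n) = (−1)^k ρ^{k²}. -/
theorem stmt18 (ρ : ℝ) (h1 : 0 < ρ) (h2 : ρ < 1) (k : ℕ) :
    Tendsto (fun n : ℕ =>
      (∫ θ in (0:ℝ)..(2 * π), Complex.exp (θ * Complex.I) ^ k *
          ((∏ j ∈ Finset.range n,
            ‖Complex.exp (θ * Complex.I) - (ρ : ℂ) ^ (2 * j + 1)‖ ^ 2 : ℝ) : ℂ)) /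
      (∫ θ in (0:ℝ)..(2 * π),
          ((∏ j ∈ Finset.range n,
            ‖Complex.exp (θ * Complex.I) - (ρ : ℂ) ^ (2 * j + 1)‖ ^ 2 : ℝ) : ℂ)))
      atTop (nhds ((-1) ^ k * (ρ : ℂ) ^ (k ^ 2))) := by
  have hρ : |ρ| < 1 := by rwa [abs_of_pos h1]
  have hratio : ∀ n, circleMoment (circleWeight ρ n) k / circleMoment (circleWeight ρ n) 0 =
      ((tripleProductCoeff ρ n k / tripleProductCoeff ρ n 0 : ℝ) : ℂ) := fun n => by
    rw [circleMoment_circleWeight h1.ne' hρ, circleMoment_circleWeight h1.ne' hρ,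
      mul_div_mul_left _ _ (by simp [Real.pi_ne_zero])]
    push_cast; rfl
  have := (continuous_ofReal.tendsto _).comp (tendsto_tripleProductCoeff_div hρ k)
  convert this using 2 with n
  · rw [Function.comp_apply, ← hratio]
    simp [circleMoment, circleWeight]
  · push_cast; rfl
end
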